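/- Define P : ℂ → ℂ by P(z) := (Σ_{ζ∈ℂ, ζ³=1} ζ·e^{2Re(ζz)}) / (Σ_{ζ∈ℂ, ζ³=1} e^{2Re(ζz)}), where both sums run over the three cube roots of unity. Then the range of P is exactly the set {v ∈ ℂ | for every ζ ∈ ℂ with ζ³ = 1, 2·Re(ζv) > −1}, which is the interior of the (closed) triangle in ℂ with vertices the three cube roots of unity 1, e^{2πi/3}, e^{4πi/3}. -/

import Mathlib

/-- The radial projection to the affine chart `ℂ × {1}` of the Ţiţeica affine sphere:
`P(z)` is the quotient of `∑_{ζ³=1} ζ e^{2 Re(ζ z)}` by `∑_{ζ³=1} e^{2 Re(ζ z)}`,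
the sums running over the three cube roots of unity. -/
noncomputable def titP (z : ℂ) : ℂ :=
  ((Polynomial.nthRoots 3 (1 : ℂ)).map fun ζ => ζ * (Real.exp (2 * (ζ * z).re) : ℂ)).sum /
    ((Polynomial.nthRoots 3 (1 : ℂ)).map fun ζ => (Real.exp (2 * (ζ * z).re) : ℂ)).sum

/-!
Write `ω = e^{2πi/3}`. Every `v ∈ ℂ` has barycentric coordinates `v = a + bω + cω²` with
`a + b + c = 1`, and then `2 Re v = 3a - 1`, `2 Re (ωv) = 3c - 1`, `2 Re (ω²v) = 3b - 1`; so the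
half-plane conditions say exactly that the barycentric coordinates are positive (nonnegative for
the closed triangle). `P(z)` is the barycentric point with weights proportional to the three
positive numbers `e^{2 Re(ζz)}`, and every positive triple of weights occurs up to scaling: for
`z = (log a + ω log c + ω² log b) / 3` the exponents `2 Re(ζz)` are `log a`, `log b`, `log c`
shifted by their common mean.
-/

open Complex ComplexConjugate
open scoped Real

noncomputable def ω : ℂ := exp (2 * π * I / 3)

lemma isPrimitiveRoot_ω : IsPrimitiveRoot ω 3 := by
  simpa [ω] using Complex.isPrimitiveRoot_exp 3 (by norm_num)

lemma ω_pow_three : ω ^ 3 = 1 := isPrimitiveRoot_ω.pow_eq_one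

lemma ω_ne_zero : ω ≠ 0 := isPrimitiveRoot_ω.ne_zero (by norm_num)

lemma one_add_ω_add_ω_sq : 1 + ω + ω ^ 2 = 0 := by
  simpa [Finset.sum_range_succ] using isPrimitiveRoot_ω.geom_sum_eq_zero (by norm_num)

lemma conj_ω : conj ω = ω ^ 2 := by
  rw [← Complex.inv_eq_conj (isPrimitiveRoot_ω.norm'_eq_one (by norm_num))]
  exact inv_eq_of_mul_eq_one_right (by rw [← pow_succ', ω_pow_three])

lemma exp_four_pi_I_div_three : exp (4 * π * I / 3) = ω ^ 2 := by
  rw [ω, ← exp_nat_mul]; congr 1; push_cast; ring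

lemma two_mul_ω_re : 2 * ω.re = -1 := by
  have h := Complex.re_eq_add_conj ω
  rw [conj_ω, show ω + ω ^ 2 = -1 by linear_combination one_add_ω_add_ω_sq] at h
  exact_mod_cast (by linear_combination 2 * h : (2 * ω.re : ℂ) = -1)

lemma two_mul_ω_sq_re : 2 * (ω ^ 2).re = -1 := by
  rw [← conj_ω, conj_re, two_mul_ω_re]

lemma pow_three_eq_one_iff {ζ : ℂ} : ζ ^ 3 = 1 ↔ ζ = 1 ∨ ζ = ω ∨ ζ = ω ^ 2 := by
  constructor
  · intro h
    obtain ⟨i, hi, rfl⟩ := isPrimitiveRoot_ω.eq_pow_of_pow_eq_one h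
    interval_cases i <;> simp
  · rintro (rfl | rfl | rfl)
    · exact one_pow 3
    · exact ω_pow_three
    · rw [← pow_mul, mul_comm, pow_mul, ω_pow_three, one_pow]

lemma forall_pow_three_eq_one_iff {p : ℂ → Prop} :
    (∀ ζ : ℂ, ζ ^ 3 = 1 → p ζ) ↔ p 1 ∧ p ω ∧ p (ω ^ 2) := by
  simp only [pow_three_eq_one_iff, or_imp, forall_and, forall_eq]

noncomputable def bary (a b c : ℝ) : ℂ := a + b * ω + c * ω ^ 2

lemma two_mul_bary_re (a b c : ℝ) : 2 * (bary a b c).re = 2 * a - b - c := by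
  have h1 := two_mul_ω_re
  have h2 := two_mul_ω_sq_re
  simp only [bary, add_re, ofReal_re, re_ofReal_mul]
  linear_combination b * h1 + c * h2

lemma ω_mul_bary (a b c : ℝ) : ω * bary a b c = bary c a b := by
  simp only [bary]; linear_combination (c : ℂ) * ω_pow_three

lemma ω_sq_mul_bary (a b c : ℝ) : ω ^ 2 * bary a b c = bary b c a := by
  rw [sq, mul_assoc, ω_mul_bary, ω_mul_bary]

lemma bary_div (a b c s : ℝ) : bary a b c / s = bary (a / s) (b / s) (c / s) := by
  simp only [bary]; push_cast; ring

lemma bary_mul (a b c t : ℝ) : bary (a * t) (b * t) (c * t) = bary a b c * t := by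
  simp only [bary]; push_cast; ring

lemma exists_bary_eq (v : ℂ) : ∃ a b c : ℝ, a + b + c = 1 ∧ bary a b c = v := by
  refine ⟨(1 + 2 * v.re) / 3, (1 + 2 * (ω ^ 2 * v).re) / 3, (1 + 2 * (ω * v).re) / 3, ?_, ?_⟩
  · have h : (v + ω ^ 2 * v + ω * v).re = 0 := by
      rw [show v + ω ^ 2 * v + ω * v = (1 + ω + ω ^ 2) * v by ring, one_add_ω_add_ω_sq, zero_mul,
        zero_re]
    simp only [add_re] at h
    linarith
  · have hω : conj (ω ^ 2) = ω := by
      rw [map_pow, conj_ω, ← pow_mul, show 2 * 2 = 3 + 1 by rfl, pow_add, ω_pow_three, one_mul,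
        pow_one]
    simp only [bary]
    push_cast
    simp only [re_eq_add_conj, map_mul, conj_ω, hω]
    linear_combination (1 + conj v) / 3 * one_add_ω_add_ω_sq + (2 * v + ω * conj v) / 3 * ω_pow_three

def openTriangle : Set ℂ := {v | ∀ ζ : ℂ, ζ ^ 3 = 1 → -1 < 2 * (ζ * v).re}

def closedTriangle : Set ℂ := {v | ∀ ζ : ℂ, ζ ^ 3 = 1 → -1 ≤ 2 * (ζ * v).re}

lemma bary_mem_openTriangle_iff {a b c : ℝ} (h : a + b + c = 1) :
    bary a b c ∈ openTriangle ↔ 0 < a ∧ 0 < b ∧ 0 < c := by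
  simp only [openTriangle, Set.mem_ofPred_eq, forall_pow_three_eq_one_iff, one_mul, ω_mul_bary, ω_sq_mul_bary, two_mul_bary_re]
  constructor <;> rintro ⟨h₁, h₂, h₃⟩ <;> refine ⟨?_, ?_, ?_⟩ <;> linarith

lemma bary_mem_closedTriangle_iff {a b c : ℝ} (h : a + b + c = 1) :
    bary a b c ∈ closedTriangle ↔ 0 ≤ a ∧ 0 ≤ b ∧ 0 ≤ c := by
  simp only [closedTriangle, Set.mem_ofPred_eq, forall_pow_three_eq_one_iff, one_mul, ω_mul_bary, ω_sq_mul_bary, two_mul_bary_re]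
  constructor <;> rintro ⟨h₁, h₂, h₃⟩ <;> refine ⟨?_, ?_, ?_⟩ <;> linarith

lemma titP_eq (z : ℂ) :
    titP z = bary (Real.exp (2 * z.re)) (Real.exp (2 * (ω * z).re)) (Real.exp (2 * (ω ^ 2 * z).re)) /
      (Real.exp (2 * z.re) + Real.exp (2 * (ω * z).re) + Real.exp (2 * (ω ^ 2 * z).re) : ℝ) := by
  rw [titP, isPrimitiveRoot_ω.nthRoots_eq (one_pow 3), bary]
  simp only [Multiset.range_succ, Multiset.range_zero, Multiset.map_cons, Multiset.map_zero,
    Multiset.sum_cons, Multiset.sum_zero, pow_zero, pow_one, mul_one, one_mul]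
  push_cast
  ring

lemma exists_titP_eq {a b c : ℝ} (ha : 0 < a) (hb : 0 < b) (hc : 0 < c) :
    ∃ z, titP z = bary a b c / (a + b + c : ℝ) := by
  set m := (Real.log a + Real.log b + Real.log c) / 3
  set z := bary (Real.log a / 3) (Real.log c / 3) (Real.log b / 3)
  have h₁ : 2 * z.re = Real.log a + -m := by rw [two_mul_bary_re]; ring
  have h₂ : 2 * (ω * z).re = Real.log b + -m := by rw [ω_mul_bary, two_mul_bary_re]; ring
  have h₃ : 2 * (ω ^ 2 * z).re = Real.log c + -m := by rw [ω_sq_mul_bary, two_mul_bary_re]; ring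
  refine ⟨z, ?_⟩
  rw [titP_eq, h₁, h₂, h₃]
  simp only [Real.exp_add, Real.exp_log ha, Real.exp_log hb, Real.exp_log hc, bary_mul,
    ← add_mul]
  push_cast
  exact mul_div_mul_right _ _ (by exact_mod_cast (Real.exp_pos _).ne')

lemma titP_mem_openTriangle (z : ℂ) : titP z ∈ openTriangle := by
  set a := Real.exp (2 * z.re)
  set b := Real.exp (2 * (ω * z).re)
  set c := Real.exp (2 * (ω ^ 2 * z).re)
  have hs : 0 < a + b + c := by positivity
  rw [titP_eq, bary_div]
  refine (bary_mem_openTriangle_iff ?_).2 ⟨?_, ?_, ?_⟩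
  · field_simp
  all_goals positivity

lemma range_titP : Set.range titP = openTriangle := by
  refine Set.Subset.antisymm (Set.range_subset_iff.2 titP_mem_openTriangle) fun v hv ↦ ?_
  obtain ⟨a, b, c, hsum, rfl⟩ := exists_bary_eq v
  obtain ⟨ha, hb, hc⟩ := (bary_mem_openTriangle_iff hsum).1 hv
  obtain ⟨z, hz⟩ := exists_titP_eq ha hb hc
  exact ⟨z, by rw [hz, hsum]; simp⟩

lemma setOf_le_two_mul_re_mul (ζ : ℂ) (r : ℝ) :
    {v : ℂ | r ≤ 2 * (ζ * v).re} = (ζ * ·) ⁻¹' {w : ℂ | r / 2 ≤ w.re} := by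
  ext v; simp [div_le_iff₀']

lemma convex_setOf_le_two_mul_re_mul (ζ : ℂ) (r : ℝ) :
    Convex ℝ {v : ℂ | r ≤ 2 * (ζ * v).re} := by
  rw [setOf_le_two_mul_re_mul]
  exact (convex_halfSpace_re_ge (r / 2)).linear_preimage (LinearMap.mulLeft ℝ ζ)

lemma interior_setOf_le_two_mul_re_mul {ζ : ℂ} (hζ : ζ ≠ 0) (r : ℝ) :
    interior {v : ℂ | r ≤ 2 * (ζ * v).re} = {v : ℂ | r < 2 * (ζ * v).re} := by
  have h := (Homeomorph.mulLeft₀ ζ hζ).preimage_interior {w : ℂ | r / 2 ≤ w.re}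
  rw [interior_setOfPred_le_re] at h
  rw [setOf_le_two_mul_re_mul, ← Homeomorph.coe_mulLeft₀ ζ hζ, ← h]
  ext v; simp [div_lt_iff₀']

lemma convex_closedTriangle : Convex ℝ closedTriangle := by
  simp only [closedTriangle, Set.ofPred_forall]
  exact convex_iInter fun ζ ↦ convex_iInter fun _ ↦ convex_setOf_le_two_mul_re_mul ζ (-1)

lemma interior_closedTriangle : interior closedTriangle = openTriangle := by
  simp only [closedTriangle, openTriangle, forall_pow_three_eq_one_iff, Set.ofPred_and,
    interior_inter, interior_setOf_le_two_mul_re_mul one_ne_zero,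
    interior_setOf_le_two_mul_re_mul ω_ne_zero,
    interior_setOf_le_two_mul_re_mul (pow_ne_zero 2 ω_ne_zero)]

lemma convexHull_cubeRoots : convexHull ℝ {1, ω, ω ^ 2} = closedTriangle := by
  refine Set.Subset.antisymm (convexHull_min ?_ convex_closedTriangle) fun v hv ↦ ?_
  · have h₁ : bary 1 0 0 = 1 := by simp [bary]
    have h₂ : bary 0 1 0 = ω := by simp [bary]
    have h₃ : bary 0 0 1 = ω ^ 2 := by simp [bary]
    rintro _ (rfl | rfl | rfl)
    · exact h₁ ▸ (bary_mem_closedTriangle_iff (by norm_num)).2 (by norm_num)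
    · exact h₂ ▸ (bary_mem_closedTriangle_iff (by norm_num)).2 (by norm_num)
    · exact h₃ ▸ (bary_mem_closedTriangle_iff (by norm_num)).2 (by norm_num)
  obtain ⟨a, b, c, hsum, rfl⟩ := exists_bary_eq v
  obtain ⟨ha, hb, hc⟩ := (bary_mem_closedTriangle_iff hsum).1 hv
  have hmem := (convex_convexHull ℝ ({1, ω, ω ^ 2} : Set ℂ)).sum_mem (t := Finset.univ)
    (w := ![a, b, c]) (z := ![1, ω, ω ^ 2]) (fun i _ ↦ by fin_cases i <;> simpa)
    (by simpa [Fin.sum_univ_three] using hsum)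
    (fun i _ ↦ subset_convexHull ℝ _ (by fin_cases i <;> simp))
  simpa [Fin.sum_univ_three, bary, Complex.real_smul] using hmem

theorem stmt7 :
    Set.range titP = {v : ℂ | ∀ ζ : ℂ, ζ ^ 3 = 1 → -1 < 2 * (ζ * v).re} ∧
    {v : ℂ | ∀ ζ : ℂ, ζ ^ 3 = 1 → -1 < 2 * (ζ * v).re} =
      interior (convexHull ℝ
        {1, Complex.exp (2 * Real.pi * Complex.I / 3),
          Complex.exp (4 * Real.pi * Complex.I / 3)}) := by
  rw [← ω, exp_four_pi_I_div_three, convexHull_cubeRoots, interior_closedTriangle]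
  exact ⟨range_titP, rfl⟩
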